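/- For a uniformly random word w with n occurrences each of 1, 2, 3, the fourth moment of s_1(w) divided by the square of its variance (the kurtosis) equals 3(10n²−n−4)/(5n(2n+1)), which tends to 3 as n → ∞. -/

import Mathlib

/-!
Condition on the first letter of a uniform word with `a` ones, `b` twos and `c` threes: it is
`1`, `2`, `3` with probabilities `a/N`, `b/N`, `c/N` (`N = a + b + c`), the rest of the word is
uniform among the words with that letter removed, and `s1` shifts by `-b`, `+a`, `0`
respectively. Hence the raw moments `m_j(a, b)` of `s1`, which do not depend on `c`, obey
`(a + b) m_j(a, b) = a E[(X - b)^j] + b E[(X' + a)^j]` with `X`, `X'` distributed as `s1` on the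
smaller word sets. The polynomials `0`, `ab(a+b+1)/3`, `0` and
`ab(a+b+1)(5ab(a+b) + 7ab - 2(a+b)(a+b+1))/15` solve this recurrence, so the mean vanishes and
at `a = b = n` the kurtosis is `m_4 / m_2^2`.
-/

/-- Number of pairs of positions i < j with `w i = a` and `w j = b`. -/
def cnt (a b : ℕ) (w : List ℕ) : ℕ :=
  ((Finset.univ : Finset (Fin w.length × Fin w.length)).filter
    (fun p => p.1 < p.2 ∧ w.get p.1 = a ∧ w.get p.2 = b)).card

def s1 (w : List ℕ) : ℤ := (cnt 2 1 w : ℤ) - (cnt 1 2 w : ℤ)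
def s2 (w : List ℕ) : ℤ := (cnt 3 2 w : ℤ) - (cnt 2 3 w : ℤ)
def s3 (w : List ℕ) : ℤ := (cnt 1 3 w : ℤ) - (cnt 3 1 w : ℤ)

/-- The (finite) set of words in {1,2,3} with `a1` ones, `a2` twos and `a3` threes. -/
def W (a1 a2 a3 : ℕ) : Finset (List ℕ) :=
  (List.replicate a1 1 ++ List.replicate a2 2 ++ List.replicate a3 3).permutations.toFinset

/-- Expectation of `g` for a uniformly random word of `W n n n`. -/
noncomputable def E (n : ℕ) (g : List ℕ → ℝ) : ℝ :=
  (∑ w ∈ W n n n, g w) / ((W n n n).card : ℝ)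

/-- The k-th central moment of `s1` over `W n n n`. -/
noncomputable def centralMoment (n : ℕ) (k : ℕ) : ℝ :=
  E n (fun w => ((s1 w : ℝ) - E n (fun v => (s1 v : ℝ))) ^ k)

open Finset Filter Topology
open scoped Nat

namespace List

variable {α : Type*} [DecidableEq α]

theorem permutations_toFinset_eq_biUnion {L : List α} (hL : L ≠ []) :
    L.permutations.toFinset =
      L.toFinset.biUnion fun x => (L.erase x).permutations.toFinset.image (cons x) := by
  ext w
  simp only [mem_toFinset, mem_permutations, Finset.mem_biUnion, Finset.mem_image]
  constructor
  · intro hw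
    cases w with
    | nil => exact absurd (perm_nil.1 hw.symm) hL
    | cons y t => exact ⟨y, hw.subset mem_cons_self, t, (cons_perm_iff_perm_erase.1 hw).2, rfl⟩
  · rintro ⟨x, hx, t, ht, rfl⟩
    exact cons_perm_iff_perm_erase.2 ⟨hx, ht⟩

theorem sum_permutations_toFinset {M : Type*} [AddCommMonoid M] {L : List α} (hL : L ≠ [])
    (f : List α → M) :
    ∑ w ∈ L.permutations.toFinset, f w =
      ∑ x ∈ L.toFinset, ∑ w ∈ (L.erase x).permutations.toFinset, f (x :: w) := by
  rw [permutations_toFinset_eq_biUnion hL, sum_biUnion]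
  · exact sum_congr rfl fun x _ => sum_image fun _ _ _ _ h => cons_injective h
  · intro x _ y _ hxy
    simp only [Function.onFun, Finset.disjoint_left, Finset.mem_image]
    rintro _ ⟨t, -, rfl⟩ ⟨u, -, hu⟩
    exact hxy (cons_eq_cons.1 hu).1.symm

theorem prod_count_factorial_eq_count_mul_erase {L : List α} {x : α} (hx : x ∈ L) :
    ∏ y ∈ L.toFinset, (L.count y)! =
      L.count x * ∏ y ∈ (L.erase x).toFinset, ((L.erase x).count y)! := by
  have hsub : (L.erase x).toFinset ⊆ L.toFinset := fun y hy => by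
    simpa using (erase_subset (l := L) (a := x)) (by simpa using hy)
  rw [prod_subset (f := fun y => ((L.erase x).count y)!) hsub fun y _ hy => by
      rw [count_eq_zero_of_not_mem (by simpa using hy), Nat.factorial_zero]]
  rw [← mul_prod_erase _ _ (mem_toFinset.2 hx), ← mul_prod_erase _ _ (mem_toFinset.2 hx),
    count_erase_self, ← mul_assoc, Nat.mul_factorial_pred (count_pos_iff.2 hx).ne']
  congr 1
  exact prod_congr rfl fun y hy => by rw [count_erase_of_ne (Finset.ne_of_mem_erase hy)]

theorem card_permutations_toFinset_mul_prod (L : List α) :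
    L.permutations.toFinset.card * ∏ x ∈ L.toFinset, (L.count x)! = L.length ! := by
  induction hn : L.length generalizing L with
  | zero => simp [length_eq_zero_iff.1 hn]
  | succ n ih =>
    rw [card_eq_sum_ones, sum_permutations_toFinset (ne_nil_of_length_pos (by omega)), sum_mul]
    calc ∑ x ∈ L.toFinset, (∑ w ∈ (L.erase x).permutations.toFinset, 1) *
          ∏ y ∈ L.toFinset, (L.count y)!
        = ∑ x ∈ L.toFinset, L.count x * n ! := sum_congr rfl fun x hx => by
          have hx : x ∈ L := mem_toFinset.1 hx
          rw [← card_eq_sum_ones, prod_count_factorial_eq_count_mul_erase hx, mul_left_comm,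
            ih _ (by rw [length_erase_of_mem hx, hn]; rfl)]
      _ = (n + 1)! := by rw [← sum_mul, sum_toFinset_count_eq_length, hn, Nat.factorial_succ]

theorem length_mul_card_permutations_toFinset_erase {L : List α} {x : α} (hx : x ∈ L) :
    L.length * (L.erase x).permutations.toFinset.card =
      L.count x * L.permutations.toFinset.card := by
  have hL : L.length ≠ 0 := (length_pos_of_mem hx).ne'
  refine Nat.eq_of_mul_eq_mul_right (m := ∏ y ∈ (L.erase x).toFinset, ((L.erase x).count y)!)
    (Finset.prod_pos fun _ _ => Nat.factorial_pos _) ?_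
  rw [mul_assoc, card_permutations_toFinset_mul_prod, length_erase_of_mem hx,
    Nat.mul_factorial_pred hL, mul_comm (L.count x), mul_assoc,
    ← prod_count_factorial_eq_count_mul_erase hx, card_permutations_toFinset_mul_prod]

theorem count_eq_card_filter_fin (b : α) (w : List α) :
    w.count b = #{j : Fin w.length | w[(j : ℕ)] = b} := by
  induction w with
  | nil => simp
  | cons x t ih =>
    simp only [card_filter, length_cons, Fin.sum_univ_succ] at ih ⊢
    simp only [count_cons, ih, add_comm, beq_iff_eq]
    congr

theorem card_permutations_toFinset_pos (L : List α) : 0 < L.permutations.toFinset.card :=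
  card_pos.2 ⟨L, mem_toFinset.2 (mem_permutations.2 (Perm.refl L))⟩

end List

section PermAvg

variable {α : Type*} [DecidableEq α]

noncomputable def permAvg (L : List α) (f : List α → ℝ) : ℝ :=
  (∑ w ∈ L.permutations.toFinset, f w) / L.permutations.toFinset.card

theorem permAvg_congr {L : List α} {f g : List α → ℝ} (h : ∀ w, w.Perm L → f w = g w) :
    permAvg L f = permAvg L g := by
  unfold permAvg
  rw [sum_congr rfl fun w hw => h w (List.mem_permutations.1 (List.mem_toFinset.1 hw))]

theorem permAvg_eq_of_perm {L L' : List α} (h : L.Perm L') (f : List α → ℝ) :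
    permAvg L f = permAvg L' f := by
  unfold permAvg
  rw [List.toFinset_eq_of_perm _ _ h.permutations]

theorem permAvg_const (L : List α) (c : ℝ) : permAvg L (fun _ => c) = c := by
  have := (L.card_permutations_toFinset_pos).ne'
  simp only [permAvg, sum_const, nsmul_eq_mul]
  field_simp

theorem permAvg_add_pow (L : List α) (g : List α → ℝ) (t : ℝ) (j : ℕ) :
    permAvg L (fun w => (g w + t) ^ j) =
      ∑ i ∈ range (j + 1), permAvg L (fun w => g w ^ i) * t ^ (j - i) * j.choose i := by
  simp only [permAvg, add_pow, sum_div, div_mul_eq_mul_div, sum_mul]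
  rw [sum_comm]

theorem length_mul_permAvg (L : List α) (f : List α → ℝ) :
    L.length * permAvg L f =
      ∑ x ∈ L.toFinset, L.count x * permAvg (L.erase x) (fun w => f (x :: w)) := by
  rcases eq_or_ne L [] with rfl | hL
  · simp
  unfold permAvg
  rw [List.sum_permutations_toFinset hL, sum_div, mul_sum]
  refine sum_congr rfl fun x hx => ?_
  have hcard : (L.length : ℝ) * (L.erase x).permutations.toFinset.card =
      L.count x * L.permutations.toFinset.card := by
    exact_mod_cast List.length_mul_card_permutations_toFinset_erase (List.mem_toFinset.1 hx)
  have := ((L.erase x).card_permutations_toFinset_pos).ne'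
  have := (L.card_permutations_toFinset_pos).ne'
  field_simp
  linear_combination (∑ w ∈ (L.erase x).permutations.toFinset, f (x :: w)) * hcard

end PermAvg

theorem cnt_cons (a b x : ℕ) (w : List ℕ) :
    cnt a b (x :: w) = cnt a b w + if x = a then w.count b else 0 := by
  unfold cnt
  simp only [card_filter, Fintype.sum_prod_type, List.length_cons, Fin.sum_univ_succ,
    List.get_eq_getElem, Fin.val_zero, Fin.val_succ, List.getElem_cons_zero,
    List.getElem_cons_succ, Fin.succ_lt_succ_iff, Fin.succ_pos, Fin.not_lt_zero, false_and,
    if_false, true_and, zero_add]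
  split_ifs with hx
  · simp [hx, List.count_eq_card_filter_fin]
    ring
  · simp [hx]

theorem cnt_eq_zero_of_not_mem {a b : ℕ} {w : List ℕ} (h : a ∉ w ∨ b ∉ w) :
    cnt a b w = 0 := by
  induction w with
  | nil => rfl
  | cons x t ih =>
    rw [cnt_cons, ih (by simp only [List.mem_cons, not_or] at h; tauto)]
    rcases h with h | h
    · simp [Ne.symm (List.ne_of_not_mem_cons h)]
    · simp [List.count_eq_zero_of_not_mem (List.not_mem_of_not_mem_cons h)]

theorem s1_eq_zero_of_not_mem {w : List ℕ} (h : 1 ∉ w ∨ 2 ∉ w) : s1 w = 0 := by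
  rw [s1, cnt_eq_zero_of_not_mem h.symm, cnt_eq_zero_of_not_mem h, sub_self]

theorem s1_cons_one (w : List ℕ) : s1 (1 :: w) = s1 w - w.count 2 := by
  simp [s1, cnt_cons]
  ring

theorem s1_cons_two (w : List ℕ) : s1 (2 :: w) = s1 w + w.count 1 := by
  simp [s1, cnt_cons]
  ring

theorem s1_cons_three (w : List ℕ) : s1 (3 :: w) = s1 w := by
  simp [s1, cnt_cons]

def sortedWord (a b c : ℕ) : List ℕ :=
  List.replicate a 1 ++ List.replicate b 2 ++ List.replicate c 3

section SortedWord

variable (a b c : ℕ)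

theorem count_one_sortedWord : (sortedWord a b c).count 1 = a := by
  simp [sortedWord, List.count_replicate]

theorem count_two_sortedWord : (sortedWord a b c).count 2 = b := by
  simp [sortedWord, List.count_replicate]

theorem count_three_sortedWord : (sortedWord a b c).count 3 = c := by
  simp [sortedWord, List.count_replicate]

theorem toFinset_sortedWord_subset : (sortedWord a b c).toFinset ⊆ {1, 2, 3} := by
  intro x
  simp only [sortedWord, List.mem_toFinset, List.mem_append, List.mem_replicate, mem_insert,
    mem_singleton]
  omega

theorem sortedWord_erase_perm :
    ((sortedWord a b c).erase 1).Perm (sortedWord (a - 1) b c) ∧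
      ((sortedWord a b c).erase 2).Perm (sortedWord a (b - 1) c) ∧
      ((sortedWord a b c).erase 3).Perm (sortedWord a b (c - 1)) := by
  simp only [List.perm_iff_count, List.count_erase, sortedWord, List.count_append,
    List.count_replicate, beq_iff_eq]
  refine ⟨fun x => ?_, fun x => ?_, fun x => ?_⟩ <;> split_ifs <;> omega

theorem length_mul_permAvg_sortedWord (f : List ℕ → ℝ) :
    (a + b + c) * permAvg (sortedWord a b c) f =
      a * permAvg (sortedWord (a - 1) b c) (fun w => f (1 :: w)) +
      b * permAvg (sortedWord a (b - 1) c) (fun w => f (2 :: w)) +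
      c * permAvg (sortedWord a b (c - 1)) (fun w => f (3 :: w)) := by
  have hlen : ((sortedWord a b c).length : ℝ) = a + b + c := by simp [sortedWord, add_assoc]
  obtain ⟨h1, h2, h3⟩ := sortedWord_erase_perm a b c
  rw [← hlen, length_mul_permAvg, sum_subset (toFinset_sortedWord_subset a b c)
    fun x _ hx => by rw [List.count_eq_zero_of_not_mem (by simpa using hx)]; simp,
    sum_insert (by decide), sum_insert (by decide), sum_singleton, count_one_sortedWord,
    count_two_sortedWord, count_three_sortedWord, permAvg_eq_of_perm h1, permAvg_eq_of_perm h2,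
    permAvg_eq_of_perm h3, add_assoc]

end SortedWord

section Moments

variable (a b c j : ℕ)

theorem permAvg_s1_cons_one_pow :
    permAvg (sortedWord a b c) (fun w => (s1 (1 :: w) : ℝ) ^ j) =
      ∑ i ∈ range (j + 1), permAvg (sortedWord a b c) (fun w => (s1 w : ℝ) ^ i) *
        (-(b : ℝ)) ^ (j - i) * j.choose i := by
  rw [← permAvg_add_pow]
  refine permAvg_congr fun w hw => ?_
  rw [s1_cons_one, hw.count_eq, count_two_sortedWord]
  push_cast
  ring

theorem permAvg_s1_cons_two_pow :
    permAvg (sortedWord a b c) (fun w => (s1 (2 :: w) : ℝ) ^ j) =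
      ∑ i ∈ range (j + 1), permAvg (sortedWord a b c) (fun w => (s1 w : ℝ) ^ i) *
        (a : ℝ) ^ (j - i) * j.choose i := by
  rw [← permAvg_add_pow]
  refine permAvg_congr fun w hw => ?_
  rw [s1_cons_two, hw.count_eq, count_one_sortedWord]
  push_cast
  ring

theorem permAvg_s1_pow_of_eq_zero (h : a = 0 ∨ b = 0) :
    permAvg (sortedWord a b c) (fun w => (s1 w : ℝ) ^ j) = 0 ^ j := by
  rw [← permAvg_const (sortedWord a b c) (0 ^ j)]
  refine permAvg_congr fun w hw => ?_
  rw [s1_eq_zero_of_not_mem, Int.cast_zero]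
  simp only [← List.count_eq_zero, hw.count_eq, count_one_sortedWord, count_two_sortedWord, h]

end Moments

theorem permAvg_s1_pow_eq_of_rec (K : ℕ) (M : ℕ → ℝ → ℝ → ℝ)
    (h_left : ∀ j ≤ K, ∀ B, M j 0 B = 0 ^ j) (h_right : ∀ j ≤ K, ∀ A, M j A 0 = 0 ^ j)
    (h_rec : ∀ j ≤ K, ∀ A B, (A + B) * M j A B =
      A * ∑ i ∈ range (j + 1), M i (A - 1) B * (-B) ^ (j - i) * j.choose i +
      B * ∑ i ∈ range (j + 1), M i A (B - 1) * A ^ (j - i) * j.choose i)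
    {j : ℕ} (hj : j ≤ K) (a b c : ℕ) :
    permAvg (sortedWord a b c) (fun w => (s1 w : ℝ) ^ j) = M j a b := by
  induction hN : a + b + c using Nat.strong_induction_on generalizing j a b c with
  | _ N ih =>
    rcases a with _ | a
    · rw [permAvg_s1_pow_of_eq_zero _ _ _ _ (.inl rfl), Nat.cast_zero, h_left j hj]
    rcases b with _ | b
    · rw [permAvg_s1_pow_of_eq_zero _ _ _ _ (.inr rfl), Nat.cast_zero, h_right j hj]
    have ih_sum : ∀ a' b' c' (t : ℝ), a' + b' + c' < N →
        ∑ i ∈ range (j + 1), permAvg (sortedWord a' b' c') (fun w => (s1 w : ℝ) ^ i) *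
          t ^ (j - i) * j.choose i =
        ∑ i ∈ range (j + 1), M i a' b' * t ^ (j - i) * j.choose i :=
      fun a' b' c' t h => sum_congr rfl fun i hi => by
        rw [ih _ h ((Nat.lt_succ_iff.1 (mem_range.1 hi)).trans hj) a' b' c' rfl]
    have hfirst := length_mul_permAvg_sortedWord (a + 1) (b + 1) c (fun w => (s1 w : ℝ) ^ j)
    have hthree : (c : ℝ) *
        permAvg (sortedWord (a + 1) (b + 1) (c - 1)) (fun w => (s1 (3 :: w) : ℝ) ^ j) =
        c * M j (a + 1 : ℕ) (b + 1 : ℕ) := by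
      rcases c with _ | c
      · simp
      · simp only [s1_cons_three, Nat.add_sub_cancel]
        rw [ih _ (by omega) hj _ _ _ rfl]
    rw [hthree, Nat.add_sub_cancel, Nat.add_sub_cancel, permAvg_s1_cons_one_pow,
      permAvg_s1_cons_two_pow, ih_sum _ _ _ _ (by omega), ih_sum _ _ _ _ (by omega)] at hfirst
    have hM := h_rec j hj (a + 1 : ℕ) (b + 1 : ℕ)
    push_cast at hfirst hM ⊢
    simp only [add_sub_cancel_right] at hM
    have hpos : (0 : ℝ) < a + 1 + (b + 1) + c := by positivity
    refine mul_left_cancel₀ hpos.ne' ?_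
    linear_combination hfirst - hM

/-- `s1Moment j a b` is the `j`-th moment of `s1` on words with `a` ones and `b` twos. Odd moments
vanish since reversing a word negates `s1`; indices above `4` are never used. -/
noncomputable def s1Moment : ℕ → ℝ → ℝ → ℝ
  | 0, _, _ => 1
  | 2, a, b => a * b * (a + b + 1) / 3
  | 4, a, b =>
    a * b * (a + b + 1) * (5 * a * b * (a + b) + 7 * a * b - 2 * (a + b) * (a + b + 1)) / 15
  | _, _, _ => 0

theorem permAvg_s1_pow_eq_s1Moment {j : ℕ} (hj : j ≤ 4) (a b c : ℕ) :
    permAvg (sortedWord a b c) (fun w => (s1 w : ℝ) ^ j) = s1Moment j a b := by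
  refine permAvg_s1_pow_eq_of_rec 4 s1Moment ?_ ?_ ?_ hj a b c <;> intro j hj <;>
    interval_cases j <;> simp [s1Moment, sum_range_succ, Nat.choose] <;> intros <;> ring

theorem tendsto_kurtosis_formula :
    Tendsto (fun m : ℕ => 3 * (10 * (m : ℝ) ^ 2 - m - 4) / (5 * m * (2 * m + 1))) atTop
      (𝓝 3) := by
  let g : ℝ → ℝ := fun x => 3 * (10 - x - 4 * x ^ 2) / (10 + 5 * x)
  have hg : ContinuousAt g 0 := by fun_prop (disch := norm_num)
  have hg0 : g 0 = 3 := by norm_num [g]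
  refine (hg0 ▸ hg.tendsto.comp tendsto_inv_atTop_nhds_zero_nat).congr'
    ((eventually_ne_atTop 0).mono fun m hm => ?_)
  have : (m : ℝ) ≠ 0 := Nat.cast_ne_zero.2 hm
  simp only [Function.comp_apply, g]
  field_simp
  ring

theorem E_eq_permAvg (n : ℕ) (g : List ℕ → ℝ) : E n g = permAvg (sortedWord n n n) g := rfl

theorem kurtosis_s1 (n : ℕ) (hn : 1 ≤ n) :
    centralMoment n 4 / (centralMoment n 2) ^ 2 =
      3 * (10 * (n : ℝ) ^ 2 - n - 4) / (5 * n * (2 * n + 1)) ∧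
    Filter.Tendsto
      (fun m : ℕ => 3 * (10 * (m : ℝ) ^ 2 - m - 4) / (5 * m * (2 * m + 1)))
      Filter.atTop (nhds 3) := by
  have hmean : E n (fun v => (s1 v : ℝ)) = 0 := by
    simpa [E_eq_permAvg, s1Moment] using permAvg_s1_pow_eq_s1Moment (j := 1) (by norm_num) n n n
  have hmoment : ∀ k ≤ 4, centralMoment n k = s1Moment k n n := fun k hk => by
    simpa only [centralMoment, hmean, sub_zero, E_eq_permAvg] using
      permAvg_s1_pow_eq_s1Moment hk n n n
  refine ⟨?_, tendsto_kurtosis_formula⟩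
  have hn' : (n : ℝ) ≠ 0 := Nat.cast_ne_zero.2 (by omega)
  rw [hmoment 4 (by norm_num), hmoment 2 (by norm_num)]
  simp only [s1Moment]
  field_simp
  ring
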